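/- Lebesgue's identity: for $|q|<1$ and any complex $x$, $\sum_{k=0}^\infty \frac{(x;q)_k \, q^{\binom{k+1}{2}}}{(q;q)_k} = (xq;q^2)_\infty \, (-q;q)_\infty$. Equivalently, letting $f(x)$ denote the left-hand side, $f(x) = (1-xq) f(xq^2)$ and $f(0)=(-q;q)_\infty$. -/

import Mathlib

/-!
Write `E_q(z) = ∑ z^j q^(j choose 2) / (q;q)_j`. Euler's identity `E_q(z) = (-z;q)_∞` follows
from `E_q(z) = (1 + z) E_q(zq)`, iterated `n` times, and continuity of `E_q` at `0`.

By the q-binomial theorem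
`(x;q)_k / (q;q)_k = ∑_{j+m=k} (-x)^j q^(j choose 2) / ((q;q)_j (q;q)_m)`,
so the left-hand side is a double series over `(j, m)`. Its sum over `m` is
`(-x)^j q^(j choose 2 + j+1 choose 2) / (q;q)_j · E_q(q^(j+1))`, and
`E_q(q^(j+1)) = (-q;q)_∞ / (-q;q)_j`. Since `(q;q)_j (-q;q)_j = (q²;q²)_j`, what remains is
`(-q;q)_∞ · E_{q²}(-xq) = (-q;q)_∞ (xq;q²)_∞`.
-/
noncomputable def qPoch (a q : ℂ) (n : ℕ) : ℂ := ∏ j ∈ Finset.range n, (1 - a * q ^ j)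

noncomputable def qPochInf (a q : ℂ) : ℂ := ∏' j : ℕ, (1 - a * q ^ j)

open Filter Finset Topology Metric

lemma Nat.succ_choose_two (n : ℕ) : (n + 1).choose 2 = n.choose 2 + n := by
  rw [Nat.choose_succ_succ', Nat.choose_one_right, add_comm]

lemma Nat.add_choose_two (a b : ℕ) : (a + b).choose 2 = a.choose 2 + a * b + b.choose 2 := by
  induction b with
  | zero => simp
  | succ b ih =>
    rw [← add_assoc, Nat.succ_choose_two, ih, Nat.succ_choose_two]
    ring

section qPoch

variable {a q : ℂ}

@[simp]
lemma qPoch_zero (a q : ℂ) : qPoch a q 0 = 1 := prod_range_zero _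

lemma qPoch_succ (a q : ℂ) (n : ℕ) : qPoch a q (n + 1) = qPoch a q n * (1 - a * q ^ n) :=
  prod_range_succ _ _

lemma norm_mul_pow_le (hq : ‖q‖ ≤ 1) (j : ℕ) : ‖a * q ^ j‖ ≤ ‖a‖ := by
  rw [norm_mul, norm_pow]
  exact mul_le_of_le_one_right (norm_nonneg a) (pow_le_one₀ (norm_nonneg q) hq)

lemma qPoch_ne_zero (ha : ‖a‖ < 1) (hq : ‖q‖ ≤ 1) (n : ℕ) : qPoch a q n ≠ 0 := by
  refine prod_ne_zero_iff.2 fun j _ h => ?_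
  have := (norm_mul_pow_le (a := a) hq j).trans_lt ha
  rw [← sub_eq_zero.1 h, norm_one] at this
  exact this.false

lemma pow_le_norm_qPoch (ha : ‖a‖ ≤ 1) (hq : ‖q‖ ≤ 1) (n : ℕ) :
    (1 - ‖a‖) ^ n ≤ ‖qPoch a q n‖ := by
  rw [qPoch, norm_prod]
  calc (1 - ‖a‖) ^ n = ∏ _j ∈ range n, (1 - ‖a‖) := by rw [prod_const, card_range]
    _ ≤ ∏ j ∈ range n, ‖1 - a * q ^ j‖ := by
      refine prod_le_prod (fun _ _ => sub_nonneg.2 ha) fun j _ => ?_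
      calc 1 - ‖a‖ ≤ 1 - ‖a * q ^ j‖ := sub_le_sub_left (norm_mul_pow_le hq j) 1
        _ ≤ ‖1 - a * q ^ j‖ := by simpa using norm_sub_norm_le (1 : ℂ) (a * q ^ j)

lemma qPoch_mul_qPoch_neg (a q : ℂ) (n : ℕ) :
    qPoch a q n * qPoch (-a) q n = qPoch (a ^ 2) (q ^ 2) n := by
  rw [qPoch, qPoch, qPoch, ← prod_mul_distrib]
  exact prod_congr rfl fun j _ => by ring

lemma multipliable_one_sub_mul_pow (hq : ‖q‖ < 1) (a : ℂ) :
    Multipliable fun j : ℕ => 1 - a * q ^ j := by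
  simpa [sub_eq_add_neg] using
    Complex.multipliable_one_add_of_summable
      ((summable_geometric_of_norm_lt_one hq).mul_left (-a))

lemma tendsto_qPoch (hq : ‖q‖ < 1) (a : ℂ) :
    Tendsto (qPoch a q) atTop (𝓝 (qPochInf a q)) :=
  (multipliable_one_sub_mul_pow hq a).hasProd.tendsto_prod_nat

lemma qPochInf_eq_qPoch_mul (hq : ‖q‖ < 1) (a : ℂ) (n : ℕ) :
    qPochInf a q = qPoch a q n * qPochInf (a * q ^ n) q := by
  have hshift : (fun j : ℕ => 1 - a * q ^ (j + n)) = fun j => 1 - a * q ^ n * q ^ j := by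
    funext j; ring
  have hm : Multipliable fun j : ℕ => 1 - a * q ^ (j + n) := by
    rw [hshift]; exact multipliable_one_sub_mul_pow hq (a * q ^ n)
  rw [qPochInf, qPochInf,
    ← Multipliable.prod_mul_tprod_nat_mul' (f := fun j => 1 - a * q ^ j) hm, hshift, qPoch]

lemma qPochInf_eq_one_sub_mul (hq : ‖q‖ < 1) (a : ℂ) :
    qPochInf a q = (1 - a) * qPochInf (a * q) q := by
  simpa [qPoch] using qPochInf_eq_qPoch_mul hq a 1

@[simp]
lemma qPochInf_zero_left (q : ℂ) : qPochInf 0 q = 1 := by simp [qPochInf]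

end qPoch

section Euler

variable {q : ℂ}

noncomputable def eulerTerm (q z : ℂ) (j : ℕ) : ℂ := z ^ j * q ^ j.choose 2 / qPoch q q j

@[simp]
lemma eulerTerm_zero (q z : ℂ) : eulerTerm q z 0 = 1 := by simp [eulerTerm]

lemma summable_pow_mul_pow_choose_two {C r : ℝ} (hC : 0 ≤ C) (hr₀ : 0 ≤ r) (hr : r < 1) :
    Summable fun j : ℕ => C ^ j * r ^ j.choose 2 := by
  refine summable_of_ratio_norm_eventually_le (r := 1 / 2) (by norm_num) ?_
  have hlim : Tendsto (fun j : ℕ => C * r ^ j) atTop (𝓝 0) := by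
    simpa using (tendsto_pow_atTop_nhds_zero_of_lt_one hr₀ hr).const_mul C
  filter_upwards [hlim.eventually_le_const (by norm_num : (0 : ℝ) < 1 / 2)] with j hj
  have hsucc : C ^ (j + 1) * r ^ (j + 1).choose 2 = C * r ^ j * (C ^ j * r ^ j.choose 2) := by
    rw [Nat.succ_choose_two]; ring
  rw [Real.norm_of_nonneg (by positivity), Real.norm_of_nonneg (by positivity), hsucc]
  exact mul_le_mul_of_nonneg_right hj (by positivity)

lemma norm_eulerTerm_le (hq : ‖q‖ < 1) {z : ℂ} {R : ℝ} (hz : ‖z‖ ≤ R) (j : ℕ) :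
    ‖eulerTerm q z j‖ ≤ (R / (1 - ‖q‖)) ^ j * ‖q‖ ^ j.choose 2 := by
  calc ‖eulerTerm q z j‖ = ‖z‖ ^ j * ‖q‖ ^ j.choose 2 / ‖qPoch q q j‖ := by
        rw [eulerTerm, norm_div, norm_mul, norm_pow, norm_pow]
    _ ≤ R ^ j * ‖q‖ ^ j.choose 2 / (1 - ‖q‖) ^ j := by
        have hR : 0 ≤ R := (norm_nonneg z).trans hz
        gcongr
        exact pow_le_norm_qPoch hq.le hq.le j
    _ = (R / (1 - ‖q‖)) ^ j * ‖q‖ ^ j.choose 2 := by ring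

lemma summable_norm_eulerTerm (hq : ‖q‖ < 1) (z : ℂ) :
    Summable fun j => ‖eulerTerm q z j‖ := by
  have hpos : 0 < 1 - ‖q‖ := sub_pos.2 hq
  exact .of_nonneg_of_le (fun _ => norm_nonneg _) (norm_eulerTerm_le hq le_rfl)
    (summable_pow_mul_pow_choose_two (by positivity) (norm_nonneg q) hq)

lemma continuousOn_tsum_eulerTerm (hq : ‖q‖ < 1) (R : ℝ) :
    ContinuousOn (fun z => ∑' j, eulerTerm q z j) (closedBall 0 R) := by
  have hpos : 0 < 1 - ‖q‖ := sub_pos.2 hq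
  refine continuousOn_tsum (fun j => ?_)
    (summable_pow_mul_pow_choose_two (C := |R| / (1 - ‖q‖)) (by positivity) (norm_nonneg q) hq)
    fun j z hz => norm_eulerTerm_le hq ((mem_closedBall_zero_iff.1 hz).trans (le_abs_self R)) j
  unfold eulerTerm
  fun_prop

lemma eulerTerm_mul_right (q z : ℂ) (j : ℕ) :
    eulerTerm q (z * q) j = q ^ j * eulerTerm q z j := by
  rw [eulerTerm, eulerTerm, mul_pow]; ring

lemma eulerTerm_succ_mul (hq : ∀ n, qPoch q q n ≠ 0) (z : ℂ) (j : ℕ) :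
    eulerTerm q z (j + 1) * (1 - q ^ (j + 1)) = z * q ^ j * eulerTerm q z j := by
  have hj := hq (j + 1)
  rw [qPoch_succ, mul_ne_zero_iff, ← pow_succ'] at hj
  rw [eulerTerm, eulerTerm, qPoch_succ, ← pow_succ', Nat.succ_choose_two]
  field_simp [hj.1, hj.2]
  ring

lemma eulerTerm_succ (hq : ∀ n, qPoch q q n ≠ 0) (z : ℂ) (j : ℕ) :
    eulerTerm q z (j + 1) = eulerTerm q (z * q) (j + 1) + z * eulerTerm q (z * q) j := by
  rw [eulerTerm_mul_right, eulerTerm_mul_right]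
  linear_combination eulerTerm_succ_mul hq z j

lemma tsum_eulerTerm_eq_one_add_mul (hq : ‖q‖ < 1) (z : ℂ) :
    ∑' j, eulerTerm q z j = (1 + z) * ∑' j, eulerTerm q (z * q) j := by
  have hs := (summable_norm_eulerTerm hq (z * q)).of_norm
  rw [(summable_norm_eulerTerm hq z).of_norm.tsum_eq_zero_add,
    tsum_congr (eulerTerm_succ (qPoch_ne_zero hq hq.le) z),
    ((summable_nat_add_iff 1).2 hs).tsum_add (hs.mul_left z), tsum_mul_left, hs.tsum_eq_zero_add]
  simp only [eulerTerm_zero]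
  ring

lemma tsum_eulerTerm_eq_qPoch_mul (hq : ‖q‖ < 1) (z : ℂ) (n : ℕ) :
    ∑' j, eulerTerm q z j = qPoch (-z) q n * ∑' j, eulerTerm q (z * q ^ n) j := by
  induction n with
  | zero => simp
  | succ n ih =>
    rw [ih, tsum_eulerTerm_eq_one_add_mul hq, qPoch_succ, pow_succ, ← mul_assoc z]
    ring

lemma tsum_eulerTerm_zero_left (q : ℂ) : ∑' j, eulerTerm q 0 j = 1 := by
  rw [tsum_eq_single 0 fun j hj => by simp [eulerTerm, hj], eulerTerm_zero]

theorem tsum_eulerTerm (hq : ‖q‖ < 1) (z : ℂ) :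
    ∑' j, eulerTerm q z j = qPochInf (-z) q := by
  have hsmall : Tendsto (fun n => z * q ^ n) atTop (𝓝[closedBall 0 ‖z‖] 0) :=
    tendsto_nhdsWithin_iff.2
      ⟨by simpa using (tendsto_pow_atTop_nhds_zero_of_norm_lt_one hq).const_mul z,
        .of_forall fun n => mem_closedBall_zero_iff.2 (norm_mul_pow_le hq.le n)⟩
  have hcont := continuousOn_tsum_eulerTerm hq ‖z‖ 0 (mem_closedBall_self (norm_nonneg z))
  have hlim := (tendsto_qPoch hq (-z)).mul (hcont.tendsto.comp hsmall)
  rw [Function.comp_def, tsum_eulerTerm_zero_left, mul_one] at hlim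
  exact tendsto_nhds_unique (tendsto_const_nhds.congr (tsum_eulerTerm_eq_qPoch_mul hq z)) hlim

end Euler

section QBinomial

variable {q : ℂ}

theorem qPoch_div_qPoch_self_eq_sum (hq : ∀ n, qPoch q q n ≠ 0) (x : ℂ) (k : ℕ) :
    qPoch x q k / qPoch q q k =
      ∑ p ∈ antidiagonal k, eulerTerm q (-x) p.1 / qPoch q q p.2 := by
  have hfac (n : ℕ) : 1 - q ^ (n + 1) ≠ 0 := by
    have := hq (n + 1)
    rw [qPoch_succ, ← pow_succ'] at this
    exact right_ne_zero_of_mul this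
  induction k with
  | zero => simp
  | succ k ih =>
    refine mul_right_cancel₀ (hfac k) ?_
    calc qPoch x q (k + 1) / qPoch q q (k + 1) * (1 - q ^ (k + 1))
        = qPoch x q k / qPoch q q k * (1 - x * q ^ k) := by
          rw [qPoch_succ, qPoch_succ, ← pow_succ']
          field_simp [hq k, hfac k]
      _ = ∑ p ∈ antidiagonal (k + 1), eulerTerm q (-x) p.1 / qPoch q q p.2 * (1 - q ^ p.2)
          + ∑ p ∈ antidiagonal (k + 1),
              q ^ p.2 * (eulerTerm q (-x) p.1 * (1 - q ^ p.1)) / qPoch q q p.2 := by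
          rw [ih, sum_mul, Nat.sum_antidiagonal_succ', Nat.sum_antidiagonal_succ]
          simp only [pow_zero, sub_self, mul_zero, zero_div, zero_add, eulerTerm_succ_mul hq,
            ← sum_add_distrib]
          refine sum_congr rfl fun p hp => ?_
          rw [← mem_antidiagonal.1 hp, qPoch_succ, ← pow_succ']
          field_simp [hq p.2, hfac p.2]
          ring
      _ = ∑ p ∈ antidiagonal (k + 1),
            eulerTerm q (-x) p.1 / qPoch q q p.2 * (1 - q ^ (k + 1)) := by
          rw [← sum_add_distrib]
          refine sum_congr rfl fun p hp => ?_
          rw [← mem_antidiagonal.1 hp, pow_add]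
          ring
      _ = _ := (sum_mul ..).symm

end QBinomial

theorem tsum_sum_antidiagonal_eq_tsum {A E : Type*} [AddCommMonoid A] [HasAntidiagonal A]
    [AddCommGroup E] [UniformSpace E] [IsUniformAddGroup E] [CompleteSpace E] [T0Space E]
    {f : A × A → E} (hf : Summable f) :
    ∑' k, ∑ p ∈ antidiagonal k, f p = ∑' p, f p := by
  let e := HasAntidiagonal.sigmaAntidiagonalEquivProd (A := A)
  rw [← e.tsum_eq, Summable.tsum_sigma (f := fun c => f (e c)) (e.summable_iff.2 hf)]
  exact tsum_congr fun k => (Finset.tsum_subtype _ _).symm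

section Lebesgue

variable {q : ℂ}

noncomputable def lebesgueSummand (q x : ℂ) (p : ℕ × ℕ) : ℂ :=
  eulerTerm q (-x) p.1 * (q ^ (p.1 + p.2 + 1).choose 2 / qPoch q q p.2)

lemma summable_lebesgueSummand (hq : ‖q‖ < 1) (x : ℂ) : Summable (lebesgueSummand q x) := by
  refine .of_norm_bounded
    ((summable_norm_eulerTerm hq (-x)).mul_norm (summable_norm_eulerTerm hq 1)) fun p => ?_
  rw [lebesgueSummand, norm_mul, norm_mul]
  gcongr
  rw [eulerTerm, one_pow, one_mul, norm_div, norm_div, norm_pow, norm_pow]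
  gcongr ?_ / _
  exact pow_le_pow_of_le_one (norm_nonneg q) hq.le (Nat.choose_le_choose 2 (by omega))

lemma qPoch_mul_pow_div_qPoch_eq_sum (hq : ∀ n, qPoch q q n ≠ 0) (x : ℂ) (k : ℕ) :
    qPoch x q k * q ^ (k + 1).choose 2 / qPoch q q k =
      ∑ p ∈ antidiagonal k, lebesgueSummand q x p := by
  rw [mul_div_right_comm, qPoch_div_qPoch_self_eq_sum hq, sum_mul]
  refine sum_congr rfl fun p hp => ?_
  rw [lebesgueSummand, ← mem_antidiagonal.1 hp]
  ring

lemma tsum_lebesgueSummand_right (hq : ‖q‖ < 1) (x : ℂ) (j : ℕ) :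
    ∑' m, lebesgueSummand q x (j, m) = qPochInf (-q) q * eulerTerm (q ^ 2) (-(x * q)) j := by
  have hinner (m : ℕ) : lebesgueSummand q x (j, m) =
      eulerTerm q (-x) j * q ^ (j + 1).choose 2 * eulerTerm q (q ^ (j + 1)) m := by
    rw [lebesgueSummand, eulerTerm.eq_1 q (q ^ (j + 1)), add_right_comm, Nat.add_choose_two,
      pow_add, pow_add, pow_mul]
    ring
  have hP := qPoch_ne_zero hq hq.le j
  have hP' := qPoch_ne_zero (a := -q) (by rwa [norm_neg]) hq.le j
  rw [tsum_congr hinner, tsum_mul_left, tsum_eulerTerm hq, qPochInf_eq_qPoch_mul hq (-q) j,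
    neg_mul, ← pow_succ', eulerTerm, eulerTerm, ← qPoch_mul_qPoch_neg, Nat.succ_choose_two]
  field_simp
  ring

theorem tsum_qPoch_mul_pow_choose_div_qPoch (hq : ‖q‖ < 1) (x : ℂ) :
    ∑' k, qPoch x q k * q ^ (k + 1).choose 2 / qPoch q q k =
      qPochInf (x * q) (q ^ 2) * qPochInf (-q) q := by
  have hs := summable_lebesgueSummand hq x
  have hq2 : ‖q ^ 2‖ < 1 := by rw [norm_pow]; exact pow_lt_one₀ (norm_nonneg q) hq two_ne_zero
  calc ∑' k, qPoch x q k * q ^ (k + 1).choose 2 / qPoch q q k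
      = ∑' p, lebesgueSummand q x p := by
        simp_rw [qPoch_mul_pow_div_qPoch_eq_sum (qPoch_ne_zero hq hq.le)]
        exact tsum_sum_antidiagonal_eq_tsum hs
    _ = ∑' j, ∑' m, lebesgueSummand q x (j, m) := hs.tsum_prod
    _ = _ := by
        rw [tsum_congr (tsum_lebesgueSummand_right hq x), tsum_mul_left, tsum_eulerTerm hq2,
          neg_neg, mul_comm]

end Lebesgue

theorem lebesgue_identity (q : ℂ) (hq : ‖q‖ < 1) :
    (∀ x : ℂ, ∑' k : ℕ, qPoch x q k * q ^ (k * (k + 1) / 2) / qPoch q q k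
        = qPochInf (x * q) (q ^ 2) * qPochInf (-q) q) ∧
    (∀ x : ℂ, ∑' k : ℕ, qPoch x q k * q ^ (k * (k + 1) / 2) / qPoch q q k
        = (1 - x * q) * ∑' k : ℕ, qPoch (x * q ^ 2) q k * q ^ (k * (k + 1) / 2) / qPoch q q k) ∧
    (∑' k : ℕ, qPoch (0 : ℂ) q k * q ^ (k * (k + 1) / 2) / qPoch q q k = qPochInf (-q) q) := by
  have htriangle (k : ℕ) : k * (k + 1) / 2 = (k + 1).choose 2 := by
    rw [Nat.choose_two_right, Nat.add_sub_cancel, mul_comm]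
  have hq2 : ‖q ^ 2‖ < 1 := by rw [norm_pow]; exact pow_lt_one₀ (norm_nonneg q) hq two_ne_zero
  simp only [htriangle]
  refine ⟨tsum_qPoch_mul_pow_choose_div_qPoch hq, fun x => ?_, ?_⟩
  · rw [tsum_qPoch_mul_pow_choose_div_qPoch hq, tsum_qPoch_mul_pow_choose_div_qPoch hq,
      qPochInf_eq_one_sub_mul hq2, show x * q * q ^ 2 = x * q ^ 2 * q by ring, mul_assoc]
  · rw [tsum_qPoch_mul_pow_choose_div_qPoch hq, zero_mul, qPochInf_zero_left, one_mul]
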